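/- arXiv:1410.3423 — 2 statements merged into one kernel-verified Lean document; each statement's English description precedes it below -/
import Mathlib

section
/- Let s and t be positive integers with gcd(s,t)=1. If 2·s·t is a perfect square, then (1+s)(1+s·t)(1+s²·t²) is not divisible by 4. -/
lemma sq_mod_four (d : ℕ) : d ^ 2 % 4 = 0 ∨ d ^ 2 % 4 = 1 := by
  have h : d % 2 = 0 ∨ d % 2 = 1 := Nat.mod_two_eq_zero_or_one d
  have : d ^ 2 = d * d := sq d
  rcases h with h | h
  · obtain ⟨e, he⟩ : 2 ∣ d := by omega
    left; subst he; rw [this]; have : 2 * e * (2 * e) = 4 * (e * e) := by ring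
    omega
  · obtain ⟨e, he⟩ : ∃ e, d = 2 * e + 1 := ⟨d / 2, by omega⟩
    right; subst he; rw [this]
    have : (2 * e + 1) * (2 * e + 1) = 4 * (e * e + e) + 1 := by ring
    omega

theorem stmt_1 (s t : ℕ) (hs : 0 < s) (ht : 0 < t) (hcop : Nat.gcd s t = 1)
    (hsq : ∃ n : ℕ, 2 * s * t = n ^ 2) :
    ¬ (4 ∣ (1 + s) * (1 + s * t) * (1 + s ^ 2 * t ^ 2)) := by
  obtain ⟨n, hn⟩ := hsq
  have hn' : 2 * (s * t) = n ^ 2 := by rw [← hn]; ring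
  have hne : 2 ∣ n := by
    have h2 : 2 ∣ n ^ 2 := ⟨s * t, hn'.symm⟩
    exact Nat.Prime.dvd_of_dvd_pow Nat.prime_two h2
  obtain ⟨m, hm⟩ := hne
  have hst : s * t = 2 * m ^ 2 := by
    have h1 : n ^ 2 = 2 * (2 * m ^ 2) := by rw [hm]; ring
    omega
  intro h
  have hodd1 : (1 + s * t) % 2 = 1 := by omega
  have hodd2 : (1 + s ^ 2 * t ^ 2) % 2 = 1 := by
    have h1 : s ^ 2 * t ^ 2 = (s * t) * (s * t) := by ring
    have h3 : (s * t) % 2 = 0 := by omega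
    have h2 : (s ^ 2 * t ^ 2) % 2 = ((s * t) % 2 * ((s * t) % 2)) % 2 := by
      rw [h1, Nat.mul_mod]
    rw [h3] at h2
    simp at h2
    omega
  have hoddp : Odd ((1 + s * t) * (1 + s ^ 2 * t ^ 2)) := by
    rw [Nat.odd_mul]
    exact ⟨Nat.odd_iff.mpr hodd1, Nat.odd_iff.mpr hodd2⟩
  have hcop4 : Nat.Coprime 4 ((1 + s * t) * (1 + s ^ 2 * t ^ 2)) := by
    have h2 : Nat.Coprime 2 ((1 + s * t) * (1 + s ^ 2 * t ^ 2)) :=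
      Nat.coprime_two_left.mpr hoddp
    have : (4 : ℕ) = 2 ^ 2 := by norm_num
    rw [this]
    exact h2.pow_left 2
  have h4s : 4 ∣ 1 + s := by
    apply hcop4.dvd_of_dvd_mul_right
    have heq : (1 + s) * ((1 + s * t) * (1 + s ^ 2 * t ^ 2)) =
        (1 + s) * (1 + s * t) * (1 + s ^ 2 * t ^ 2) := by ring
    rw [heq]; exact h
  have hs3 : s % 4 = 3 := by omega
  have hteven : t % 2 = 0 := by
    have hev : Even (s * t) := ⟨m ^ 2, by omega⟩
    rcases Nat.even_mul.mp hev with hh | hh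
    · exfalso; have := Nat.even_iff.mp hh; omega
    · exact Nat.even_iff.mp hh
  obtain ⟨u, hu⟩ : 2 ∣ t := by omega
  have hsu : s * u = m ^ 2 := by
    have h1 : s * t = s * u * 2 := by rw [hu]; ring
    omega
  have hcop2 : Nat.Coprime s u :=
    Nat.Coprime.coprime_dvd_right ⟨2, by omega⟩ hcop
  obtain ⟨d, hd⟩ := exists_eq_pow_of_mul_eq_pow (c := m) (k := 2)
    (by have hg : gcd s u = 1 := hcop2; exact hg ▸ isUnit_one) hsu
  have := sq_mod_four d
  omega
end

section
/- Let P⁺ be a Sylow 2-subgroup of A_n with n ≥ 6, and let Q⁺ ≤ P⁺ be a subgroup of index at most 2 in P⁺. Then Q⁺ contains a product of two disjoint transpositions. -/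
/-!
An element σ = (a b c d)(e f) of `A_n` has order 4, so some conjugate `g σ g⁻¹` lies in the
Sylow 2-subgroup `P`. Having index at most 2 in `P`, `Q` contains the squares of elements of `P`,
in particular `(g σ g⁻¹)² = g (a c)(b d) g⁻¹`, which is again a product of two disjoint transpositions.
-/

open Equiv

namespace Equiv.Perm

variable {α : Type*} [DecidableEq α]

def IsDoubleTransposition (σ : Perm α) : Prop :=
  ∃ a b c d : α, a ≠ b ∧ c ≠ d ∧ a ≠ c ∧ a ≠ d ∧ b ≠ c ∧ b ≠ d ∧ σ = swap a b * swap c d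

theorem IsDoubleTransposition.conj {σ : Perm α} (hσ : σ.IsDoubleTransposition) (g : Perm α) :
    (g * σ * g⁻¹).IsDoubleTransposition := by
  obtain ⟨a, b, c, d, hab, hcd, hac, had, hbc, hbd, rfl⟩ := hσ
  refine ⟨g a, g b, g c, g d, g.injective.ne hab, g.injective.ne hcd, g.injective.ne hac,
    g.injective.ne had, g.injective.ne hbc, g.injective.ne hbd, ?_⟩
  rw [swap_apply_apply, swap_apply_apply]
  group

theorem IsDoubleTransposition.sq_eq_one {σ : Perm α} (hσ : σ.IsDoubleTransposition) :
    σ ^ 2 = 1 := by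
  obtain ⟨a, b, c, d, hab, hcd, hac, had, hbc, hbd, rfl⟩ := hσ
  have hdisj : (swap a b).Disjoint (swap c d) := disjoint_swap_swap (by simp [*])
  rw [hdisj.commute.mul_pow, sq, sq, swap_mul_self, swap_mul_self, one_mul]

theorem sq_swap_mul_swap_mul_swap {a b c d : α} (h : [a, b, c, d].Nodup) :
    (swap a b * swap b c * swap c d) ^ 2 = swap a c * swap b d := by
  simp only [List.nodup_cons, List.mem_cons, List.not_mem_nil, or_false, not_or] at h
  obtain ⟨⟨hab, hac, had⟩, ⟨hbc, hbd⟩, hcd, -⟩ := h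
  ext x
  simp only [sq, Perm.mul_apply]
  by_cases hxa : x = a
  · subst hxa; simp [swap_apply_of_ne_of_ne, *, Ne.symm]
  by_cases hxb : x = b
  · subst hxb; simp [swap_apply_of_ne_of_ne, *, Ne.symm]
  by_cases hxc : x = c
  · subst hxc; simp [swap_apply_of_ne_of_ne, *, Ne.symm]
  by_cases hxd : x = d
  · subst hxd; simp [swap_apply_of_ne_of_ne, *, Ne.symm]
  simp [swap_apply_of_ne_of_ne, *]

theorem exists_mem_alternatingGroup_isDoubleTransposition_sq [Fintype α]
    (h : 6 ≤ Fintype.card α) : ∃ σ ∈ alternatingGroup α, (σ ^ 2).IsDoubleTransposition := by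
  obtain ⟨ι⟩ := Function.Embedding.nonempty_of_card_le (α := Fin 6) (by simpa using h)
  have nodup (l : List (Fin 6)) (hl : l.Nodup) : (l.map ι).Nodup := hl.map ι.injective
  have sign_swap_ι (i j : Fin 6) (hij : i ≠ j) : sign (swap (ι i) (ι j)) = -1 :=
    sign_swap (ι.injective.ne hij)
  set ρ := swap (ι 0) (ι 1) * swap (ι 1) (ι 2) * swap (ι 2) (ι 3)
  have hρ_disj : ρ.Disjoint (swap (ι 4) (ι 5)) :=
    ((disjoint_swap_swap (nodup [0, 1, 4, 5] (by decide))).mul_left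
      (disjoint_swap_swap (nodup [1, 2, 4, 5] (by decide)))).mul_left
      (disjoint_swap_swap (nodup [2, 3, 4, 5] (by decide)))
  refine ⟨ρ * swap (ι 4) (ι 5), by simp [ρ, mem_alternatingGroup, sign_swap_ι], ?_⟩
  rw [hρ_disj.commute.mul_pow, sq_swap_mul_swap_mul_swap (nodup [0, 1, 2, 3] (by decide)),
    sq (swap _ _), swap_mul_self, mul_one]
  exact ⟨_, _, _, _, ι.injective.ne (by decide), ι.injective.ne (by decide),
    ι.injective.ne (by decide), ι.injective.ne (by decide), ι.injective.ne (by decide),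
    ι.injective.ne (by decide), rfl⟩

end Equiv.Perm

theorem Sylow.exists_mul_mul_inv_mem {G : Type*} [Group G] {p : ℕ} [Fact p.Prime]
    [Finite (Sylow p G)] (P : Sylow p G) {x : G} {k : ℕ} (hx : x ^ p ^ k = 1) :
    ∃ g : G, g * x * g⁻¹ ∈ P := by
  have hpgroup : IsPGroup p (Subgroup.zpowers x) := by
    rintro ⟨_, m, rfl⟩
    refine ⟨k, Subtype.ext ?_⟩
    rw [Subgroup.coe_pow, ← zpow_natCast, ← zpow_mul, mul_comm, zpow_mul, zpow_natCast, hx,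
      one_zpow, Subgroup.coe_one]
  obtain ⟨R, hR⟩ := hpgroup.exists_le_sylow
  obtain ⟨g, rfl⟩ := MulAction.exists_smul_eq G R P
  exact ⟨g, Subgroup.smul_mem_pointwise_smul x (MulAut.conj g) R (hR (Subgroup.mem_zpowers x))⟩

theorem Subgroup.sq_mem_of_relIndex_le_two {G : Type*} [Group G] {Q H : Subgroup G} [Finite H]
    (h : Q.relIndex H ≤ 2) {x : G} (hx : x ∈ H) : x ^ 2 ∈ Q := by
  have h0 : Q.relIndex H ≠ 0 := Subgroup.index_ne_zero_of_finite
  obtain hQH | hQH : Q.relIndex H = 1 ∨ Q.relIndex H = 2 := by omega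
  · exact Q.pow_mem (Subgroup.relIndex_eq_one.mp hQH hx) 2
  · exact Subgroup.mem_subgroupOf.mp (Subgroup.sq_mem_of_index_two hQH ⟨x, hx⟩)

theorem stmt_12_general (n : ℕ) (hn : 6 ≤ n)
    (P : Sylow 2 (alternatingGroup (Fin n)))
    (Q : Subgroup (alternatingGroup (Fin n)))
    (hindex : Q.relIndex (P : Subgroup (alternatingGroup (Fin n))) ≤ 2) :
    ∃ g ∈ Q, ∃ a b c d : Fin n, a ≠ b ∧ c ≠ d ∧ a ≠ c ∧ a ≠ d ∧ b ≠ c ∧ b ≠ d ∧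
      (g : Equiv.Perm (Fin n)) = Equiv.swap a b * Equiv.swap c d := by
  obtain ⟨σ, hσA, hσ2⟩ :=
    Perm.exists_mem_alternatingGroup_isDoubleTransposition_sq (α := Fin n) (by simpa using hn)
  have hσ4 : (⟨σ, hσA⟩ : alternatingGroup (Fin n)) ^ 2 ^ 2 = 1 :=
    Subtype.ext <| show σ ^ (2 * 2) = 1 by rw [pow_mul, hσ2.sq_eq_one]
  obtain ⟨g, hg⟩ := P.exists_mul_mul_inv_mem hσ4
  refine ⟨_, Q.sq_mem_of_relIndex_le_two hindex hg, ?_⟩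
  have hcoe : (((g * ⟨σ, hσA⟩ * g⁻¹) ^ 2 : alternatingGroup (Fin n)) : Perm (Fin n)) =
      g * σ ^ 2 * (g : Perm (Fin n))⁻¹ := by
    simp [conj_pow]
  rw [hcoe]
  exact hσ2.conj g

theorem stmt_12 (n : ℕ) (hn : 6 ≤ n)
    (P : Sylow 2 (alternatingGroup (Fin n)))
    (Q : Subgroup (alternatingGroup (Fin n))) (hQP : Q ≤ (P : Subgroup (alternatingGroup (Fin n))))
    (hindex : Q.relIndex (P : Subgroup (alternatingGroup (Fin n))) ≤ 2) :
    ∃ g ∈ Q, ∃ a b c d : Fin n, a ≠ b ∧ c ≠ d ∧ a ≠ c ∧ a ≠ d ∧ b ≠ c ∧ b ≠ d ∧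
      (g : Equiv.Perm (Fin n)) = Equiv.swap a b * Equiv.swap c d :=
  stmt_12_general n hn P Q hindex
end
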